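/- Let k be a field of characteristic zero and let D = P·∂/∂x + Q·∂/∂y be a derivation of k[x,y] with gcd(P,Q) = 1. If there exists a non-constant polynomial u ∈ k[x,y] with D(u) = 0, then there exists a nonzero polynomial h ∈ k[x,y] such that ∂u/∂x = h·Q and ∂u/∂y = -h·P (equivalently, h·D equals the Hamiltonian derivation D_u = -(∂u/∂y)·∂/∂x + (∂u/∂x)·∂/∂y). -/

import Mathlib

/-!
Since `P·∂u/∂x = -Q·∂u/∂y` and `P`, `Q` are coprime, `Q` divides `∂u/∂x`; writing
`∂u/∂x = h·Q` forces `∂u/∂y = -h·P`. If `h` were zero, the gradient of `u` would vanish,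
which in characteristic zero makes `u` constant.
-/

open MvPolynomial

theorem IsRelPrime.exists_eq_mul_of_mul_add_mul_eq_zero {R : Type*} [CommRing R]
    [NoZeroDivisors R] [DecompositionMonoid R] {P Q a b : R} (hPQ : IsRelPrime P Q)
    (h : P * a + Q * b = 0) : ∃ c, a = c * Q ∧ b = -(c * P) := by
  obtain ⟨g, rfl⟩ : P ∣ b := hPQ.dvd_of_dvd_mul_left ⟨-a, by linear_combination h⟩
  rcases eq_or_ne P 0 with rfl | hP
  · obtain ⟨c, rfl⟩ : Q ∣ a := (isRelPrime_zero_left.mp hPQ).dvd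
    exact ⟨c, mul_comm Q c, by simp⟩
  · have hPa : P * (a + g * Q) = 0 := by linear_combination h
    refine ⟨-g, ?_, by ring⟩
    linear_combination (mul_eq_zero.mp hPa).resolve_left hP

theorem MvPolynomial.eq_C_of_pderiv_eq_zero {σ R : Type*} [CommSemiring R] [IsAddTorsionFree R]
    {f : MvPolynomial σ R} (h : ∀ i, pderiv i f = 0) : f = C (coeff 0 f) := by
  classical
  ext m
  rcases eq_or_ne m 0 with rfl | hm
  · simp
  obtain ⟨i, hi⟩ : ∃ i, m i ≠ 0 := by
    by_contra! hzero
    exact hm (Finsupp.ext hzero)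
  have hcoeff := congr_arg (coeff (m - Finsupp.single i 1)) (h i)
  rw [coeff_pderiv, tsub_add_cancel_of_le (Finsupp.single_le_iff.mpr (by omega)), coeff_zero,
    ← Nat.cast_succ, mul_comm, ← nsmul_eq_mul] at hcoeff
  rw [coeff_C, if_neg (Ne.symm hm)]
  exact nsmul_right_injective (Nat.succ_ne_zero _) (hcoeff.trans (smul_zero _).symm)

/-- If a reduced derivation `D = P ∂/∂x + Q ∂/∂y` of `k[x,y]` annihilates a
non-constant polynomial `u`, then there is a nonzero `h` with
`∂u/∂x = h·Q` and `∂u/∂y = -h·P`, i.e. `h·D = D_u`. -/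
theorem reduced_derivation_with_kernel_is_multiple_of_hamiltonian
    {k : Type*} [Field k] [CharZero k]
    (P Q u : MvPolynomial (Fin 2) k)
    (hred : ∀ d : MvPolynomial (Fin 2) k, d ∣ P → d ∣ Q → IsUnit d)
    (hu : ∀ c : k, u ≠ C c)
    (hDu : P * pderiv 0 u + Q * pderiv 1 u = 0) :
    ∃ h : MvPolynomial (Fin 2) k, h ≠ 0 ∧
      pderiv 0 u = h * Q ∧ pderiv 1 u = -(h * P) := by
  have hPQ : IsRelPrime P Q := fun d => hred d
  obtain ⟨h, hx, hy⟩ := hPQ.exists_eq_mul_of_mul_add_mul_eq_zero hDu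
  refine ⟨h, ?_, hx, hy⟩
  rintro rfl
  refine hu (coeff 0 u) (eq_C_of_pderiv_eq_zero (Fin.forall_fin_two.mpr ⟨?_, ?_⟩))
  · simpa using hx
  · simpa using hy
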